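/- arXiv:2004.05295 — 2 statements merged into one kernel-verified Lean document; each statement's English description precedes it below -/
import Mathlib

section
/- A two-dimensional convex lattice polygon Δ ⊂ ℝ² containing the origin in its interior is reflexive (i.e., its polar dual Δ° = {v ∈ ℝ² : ⟨u, v⟩ ≥ −1 for all u ∈ Δ} is again a lattice polygon, meaning all its vertices lie in ℤ²) if and only if the origin is the unique lattice point in the interior of Δ. -/
/-- A point of `ℝ × ℝ` is a lattice point if both coordinates are integers. -/
def IsLatticePt (p : ℝ × ℝ) : Prop := ∃ m n : ℤ, p = ((m : ℝ), (n : ℝ))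

/-!
If `Δ°` is the convex hull of lattice points and `p` is an interior lattice point of `Δ`, then
`⟪p, t⟫` is an integer for every lattice point `t ∈ Δ°`, and it is `≥ 0` because a slight
dilate `(1 + ε) • p` still lies in `Δ`. Hence `⟪p, ·⟫ ≥ 0` on `Δ°`, which is a neighbourhood
of `0` because `Δ` is bounded, so `p = 0`.

Conversely, a vertex `w` of `Δ°` satisfies `⟪u, w⟫ = ⟪v, w⟫ = -1` for two linearly independent
lattice points `u, v ∈ Δ`. Reduce a lattice point `x = α • u + β • v` modulo `ℤu + ℤv` to
`p = a • u + b • v` with `a, b ∈ [0, 1)`. If `0 < a + b < 1`, then `p` is a nonzero interior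
lattice point of `Δ`; if `a + b > 1`, so is `u + v - p`. Hence `a + b ∈ {0, 1}`, so
`⟪x, w⟫ = -(α + β)` is an integer for every lattice point `x`, i.e. `w ∈ ℤ²`. Krein–Milman
then writes `Δ°` as the convex hull of its finitely many lattice points.
-/

open Filter Topology

namespace LatticePolygon

def latticePoints : AddSubgroup (ℝ × ℝ) where
  carrier := {p | IsLatticePt p}
  add_mem' := by
    rintro _ _ ⟨m, n, rfl⟩ ⟨m', n', rfl⟩
    exact ⟨m + m', n + n', by simp⟩
  zero_mem' := ⟨0, 0, by ext <;> simp⟩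
  neg_mem' := by
    rintro _ ⟨m, n, rfl⟩
    exact ⟨-m, -n, by simp⟩

theorem mem_latticePoints {p : ℝ × ℝ} : p ∈ latticePoints ↔ IsLatticePt p := Iff.rfl

def dot (u v : ℝ × ℝ) : ℝ := u.1 * v.1 + u.2 * v.2

def det (u v : ℝ × ℝ) : ℝ := u.1 * v.2 - u.2 * v.1

theorem dot_comm (u v : ℝ × ℝ) : dot u v = dot v u := by
  unfold dot; ring

@[simp]
theorem dot_add_right (u v w : ℝ × ℝ) : dot u (v + w) = dot u v + dot u w := by
  simp only [dot, Prod.fst_add, Prod.snd_add]; ring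

@[simp]
theorem dot_smul_right (u v : ℝ × ℝ) (a : ℝ) : dot u (a • v) = a * dot u v := by
  simp only [dot, Prod.smul_fst, Prod.smul_snd, smul_eq_mul]; ring

@[simp]
theorem dot_add_left (u v w : ℝ × ℝ) : dot (u + v) w = dot u w + dot v w := by
  simp only [dot_comm _ w, dot_add_right]

@[simp]
theorem dot_smul_left (u v : ℝ × ℝ) (a : ℝ) : dot (a • u) v = a * dot u v := by
  simp only [dot_comm _ v, dot_smul_right]

theorem isLinearMap_dot_right (u : ℝ × ℝ) : IsLinearMap ℝ (dot u) :=
  ⟨dot_add_right u, fun a v => dot_smul_right u v a⟩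

theorem isLinearMap_dot_left (v : ℝ × ℝ) : IsLinearMap ℝ (fun u => dot u v) :=
  ⟨fun u w => dot_add_left u w v, fun a u => dot_smul_left u v a⟩

theorem continuous_dot_right (u : ℝ × ℝ) : Continuous (dot u) := by
  unfold dot; fun_prop

theorem exists_dot_eq_intCast {p q : ℝ × ℝ} (hp : IsLatticePt p)
    (hq : IsLatticePt q) : ∃ k : ℤ, dot p q = k := by
  obtain ⟨m, n, rfl⟩ := hp
  obtain ⟨a, b, rfl⟩ := hq
  exact ⟨m * a + n * b, by push_cast [dot]; ring⟩

theorem eq_zero_of_smul_add_smul_eq_zero {u v : ℝ × ℝ} {a b : ℝ} (hdet : det u v ≠ 0)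
    (h : a • u + b • v = 0) : a = 0 ∧ b = 0 := by
  have h₁ : a * u.1 + b * v.1 = 0 := by simpa using congrArg Prod.fst h
  have h₂ : a * u.2 + b * v.2 = 0 := by simpa using congrArg Prod.snd h
  have ha : a * det u v = 0 := by unfold det; linear_combination v.2 * h₁ - v.1 * h₂
  have hb : b * det u v = 0 := by unfold det; linear_combination u.1 * h₂ - u.2 * h₁
  exact ⟨(mul_eq_zero.1 ha).resolve_right hdet, (mul_eq_zero.1 hb).resolve_right hdet⟩

theorem exists_smul_add_smul_eq {u v : ℝ × ℝ} (hdet : det u v ≠ 0) (x : ℝ × ℝ) :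
    ∃ a b : ℝ, a • u + b • v = x := by
  refine ⟨det x v / det u v, det u x / det u v, ?_⟩
  ext <;> simp only [Prod.fst_add, Prod.snd_add, Prod.smul_fst, Prod.smul_snd, smul_eq_mul] <;>
    field_simp <;> unfold det <;> ring

theorem _root_.Convex.smul_add_smul_mem_interior {E : Type*} [AddCommGroup E] [Module ℝ E]
    [TopologicalSpace E] [IsTopologicalAddGroup E] [ContinuousSMul ℝ E] {Δ : Set E}
    (hconv : Convex ℝ Δ) (h0 : (0 : E) ∈ interior Δ) {x y : E} (hx : x ∈ Δ) (hy : y ∈ Δ)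
    {a b : ℝ} (ha : 0 ≤ a) (hb : 0 ≤ b) (hpos : 0 < a + b) (hlt : a + b < 1) :
    a • x + b • y ∈ interior Δ := by
  have hz : (a / (a + b)) • x + (b / (a + b)) • y ∈ Δ :=
    hconv hx hy (by positivity) (by positivity) (by field_simp)
  have key := hconv.combo_interior_self_mem_interior h0 hz (sub_pos.2 hlt) hpos.le
    (sub_add_cancel 1 (a + b))
  rwa [smul_zero, zero_add, smul_add, smul_smul, smul_smul, mul_div_cancel₀ _ hpos.ne',
    mul_div_cancel₀ _ hpos.ne'] at key

theorem eq_zero_of_isLatticePt_smul_add_smul {Δ : Set (ℝ × ℝ)} (hconv : Convex ℝ Δ)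
    (h0 : (0 : ℝ × ℝ) ∈ interior Δ) (huniq : ∀ p ∈ interior Δ, IsLatticePt p → p = 0)
    {u v : ℝ × ℝ} (hu : u ∈ Δ) (hv : v ∈ Δ) (hdet : det u v ≠ 0) {a b : ℝ}
    (ha : 0 ≤ a) (hb : 0 ≤ b) (hab : a + b < 1) (hp : IsLatticePt (a • u + b • v)) :
    a = 0 ∧ b = 0 := by
  rcases (add_nonneg ha hb).eq_or_lt with hsum | hsum
  · constructor <;> linarith
  · exact eq_zero_of_smul_add_smul_eq_zero hdet
      (huniq _ (hconv.smul_add_smul_mem_interior h0 hu hv ha hb hsum hab) hp)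

theorem add_eq_zero_or_eq_one_of_isLatticePt {Δ : Set (ℝ × ℝ)} (hconv : Convex ℝ Δ)
    (h0 : (0 : ℝ × ℝ) ∈ interior Δ) (huniq : ∀ p ∈ interior Δ, IsLatticePt p → p = 0)
    {u v : ℝ × ℝ} (hu : u ∈ Δ) (hv : v ∈ Δ) (hul : IsLatticePt u) (hvl : IsLatticePt v)
    (hdet : det u v ≠ 0) {a b : ℝ} (ha₀ : 0 ≤ a) (ha₁ : a < 1) (hb₀ : 0 ≤ b) (hb₁ : b < 1)
    (hp : IsLatticePt (a • u + b • v)) : a + b = 0 ∨ a + b = 1 := by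
  rcases lt_or_ge (a + b) 1 with hlt | hge
  · obtain ⟨rfl, rfl⟩ :=
      eq_zero_of_isLatticePt_smul_add_smul hconv h0 huniq hu hv hdet ha₀ hb₀ hlt hp
    exact Or.inl (add_zero 0)
  · refine Or.inr (hge.eq_or_lt'.resolve_right fun hgt => ?_)
    have hq : IsLatticePt ((1 - a) • u + (1 - b) • v) := by
      rw [show (1 - a) • u + (1 - b) • v = u + v - (a • u + b • v) by module]
      exact sub_mem (add_mem (mem_latticePoints.2 hul) hvl) hp
    have := eq_zero_of_isLatticePt_smul_add_smul hconv h0 huniq hu hv hdet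
      (sub_nonneg.2 ha₁.le) (sub_nonneg.2 hb₁.le) (by linarith) hq
    linarith [this.1]

theorem exists_add_eq_intCast_of_isLatticePt {Δ : Set (ℝ × ℝ)} (hconv : Convex ℝ Δ)
    (h0 : (0 : ℝ × ℝ) ∈ interior Δ) (huniq : ∀ p ∈ interior Δ, IsLatticePt p → p = 0)
    {u v : ℝ × ℝ} (hu : u ∈ Δ) (hv : v ∈ Δ) (hul : IsLatticePt u) (hvl : IsLatticePt v)
    (hdet : det u v ≠ 0) {α β : ℝ} (hx : IsLatticePt (α • u + β • v)) :
    ∃ k : ℤ, α + β = k := by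
  have hp : IsLatticePt (Int.fract α • u + Int.fract β • v) := by
    rw [show Int.fract α • u + Int.fract β • v = α • u + β • v - (⌊α⌋ • u + ⌊β⌋ • v) by
      simp only [← Int.self_sub_floor, sub_smul, Int.cast_smul_eq_zsmul]; abel]
    exact sub_mem hx (add_mem (zsmul_mem (mem_latticePoints.2 hul) _) (zsmul_mem hvl _))
  have hα := Int.floor_add_fract α
  have hβ := Int.floor_add_fract β
  rcases add_eq_zero_or_eq_one_of_isLatticePt hconv h0 huniq hu hv hul hvl hdet
    (Int.fract_nonneg α) (Int.fract_lt_one α) (Int.fract_nonneg β) (Int.fract_lt_one β) hp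
    with h | h
  · exact ⟨⌊α⌋ + ⌊β⌋, by push_cast; linarith⟩
  · exact ⟨⌊α⌋ + ⌊β⌋ + 1, by push_cast; linarith⟩

theorem isLatticePt_of_dot_eq_neg_one {Δ : Set (ℝ × ℝ)} (hconv : Convex ℝ Δ)
    (h0 : (0 : ℝ × ℝ) ∈ interior Δ) (huniq : ∀ p ∈ interior Δ, IsLatticePt p → p = 0)
    {u v w : ℝ × ℝ} (hu : u ∈ Δ) (hv : v ∈ Δ) (hul : IsLatticePt u) (hvl : IsLatticePt v)
    (hdet : det u v ≠ 0) (huw : dot u w = -1) (hvw : dot v w = -1) : IsLatticePt w := by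
  have hint : ∀ x, IsLatticePt x → ∃ k : ℤ, dot x w = k := by
    intro x hx
    obtain ⟨α, β, rfl⟩ := exists_smul_add_smul_eq hdet x
    obtain ⟨k, hk⟩ := exists_add_eq_intCast_of_isLatticePt hconv h0 huniq hu hv hul hvl hdet hx
    exact ⟨-k, by simp only [dot_add_left, dot_smul_left, huw, hvw]; push_cast; linarith⟩
  obtain ⟨m, hm⟩ := hint (1, 0) ⟨1, 0, by simp⟩
  obtain ⟨n, hn⟩ := hint (0, 1) ⟨0, 1, by simp⟩
  exact ⟨m, n, Prod.ext (by simpa [dot] using hm) (by simpa [dot] using hn)⟩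

def polarDual (Δ : Set (ℝ × ℝ)) : Set (ℝ × ℝ) := {v | ∀ u ∈ Δ, -1 ≤ dot u v}

theorem polarDual_eq_biInter (Δ : Set (ℝ × ℝ)) :
    polarDual Δ = ⋂ u ∈ Δ, {v | -1 ≤ dot u v} := by
  ext; simp [polarDual]

theorem convex_polarDual (Δ : Set (ℝ × ℝ)) : Convex ℝ (polarDual Δ) := by
  rw [polarDual_eq_biInter]
  exact convex_iInter₂ fun u _ => convex_halfSpace_ge (isLinearMap_dot_right u) (-1)

theorem isClosed_polarDual (Δ : Set (ℝ × ℝ)) : IsClosed (polarDual Δ) := by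
  rw [polarDual_eq_biInter]
  exact isClosed_biInter fun u _ => isClosed_le continuous_const (continuous_dot_right u)

theorem polarDual_convexHull (S : Set (ℝ × ℝ)) :
    polarDual (convexHull ℝ S) = polarDual S :=
  Set.Subset.antisymm (fun _ hv u hu => hv u (subset_convexHull ℝ S hu)) fun v hv _ hu =>
    convexHull_min hv (convex_halfSpace_ge (isLinearMap_dot_left v) (-1)) hu

theorem polarDual_finset_mem_nhds_zero (S : Finset (ℝ × ℝ)) :
    polarDual (S : Set (ℝ × ℝ)) ∈ 𝓝 0 := by
  rw [polarDual_eq_biInter, Finset.set_biInter_coe, Filter.biInter_finset_mem]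
  intro u _
  have hlt : (-1 : ℝ) < dot u 0 := by simp [dot]
  exact (((continuous_dot_right u).tendsto 0).eventually_const_lt hlt).mono fun _ h => h.le

theorem isBounded_polarDual {Δ : Set (ℝ × ℝ)} (h0 : (0 : ℝ × ℝ) ∈ interior Δ) :
    Bornology.IsBounded (polarDual Δ) := by
  obtain ⟨r, hr, hball⟩ := Metric.mem_nhds_iff.1 (mem_interior_iff_mem_nhds.1 h0)
  refine (Metric.isBounded_closedBall (x := 0) (r := 2 / r)).subset fun v hv => ?_
  have habs : ∀ u : ℝ × ℝ, ‖u‖ < r → |dot u v| ≤ 1 := by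
    intro u hu
    have h₁ := hv u (hball (by simpa using hu))
    have h₂ := hv (-u) (hball (by simpa using hu))
    rw [show -u = (-1 : ℝ) • u by simp, dot_smul_left] at h₂
    exact abs_le.2 ⟨h₁, by linarith⟩
  have h₁ := habs (r / 2, 0) (by simp [Prod.norm_def, abs_of_pos hr, hr])
  have h₂ := habs (0, r / 2) (by simp [Prod.norm_def, abs_of_pos hr, hr])
  simp only [dot, zero_mul, add_zero, zero_add, abs_mul, abs_of_pos (half_pos hr)] at h₁ h₂
  rw [mem_closedBall_zero_iff, Prod.norm_def, Real.norm_eq_abs, Real.norm_eq_abs]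
  exact max_le (by rw [le_div_iff₀ hr]; linarith) (by rw [le_div_iff₀ hr]; linarith)

theorem _root_.IsCompact.finite_setOf_isLatticePt {K : Set (ℝ × ℝ)} (hK : IsCompact K) :
    {p ∈ K | IsLatticePt p}.Finite := by
  set cast : ℤ × ℤ → ℝ × ℝ := Prod.map (↑) (↑)
  have hcast : Tendsto cast cofinite (cocompact (ℝ × ℝ)) := by
    rw [← Filter.coprod_cofinite, ← Filter.coprod_cocompact]
    exact Int.tendsto_coe_cofinite.prodMap_coprod Int.tendsto_coe_cofinite
  refine ((tendsto_cofinite_cocompact_iff.1 hcast K hK).image cast).subset ?_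
  rintro _ ⟨hp, m, n, rfl⟩
  exact ⟨(m, n), hp, rfl⟩

theorem exists_ne_zero_forall_dot_eq_zero {A : Set (ℝ × ℝ)}
    (h : ∀ u ∈ A, ∀ u' ∈ A, det u u' = 0) : ∃ d ≠ 0, ∀ u ∈ A, dot u d = 0 := by
  by_cases hA : ∃ u₀ ∈ A, u₀ ≠ 0
  · obtain ⟨u₀, hu₀, hne⟩ := hA
    refine ⟨(-u₀.2, u₀.1), fun hd => hne ?_, fun u hu => ?_⟩
    · simp only [Prod.ext_iff, Prod.fst_zero, Prod.snd_zero, neg_eq_zero] at hd ⊢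
      exact hd.symm
    · have := h u hu u₀ hu₀
      simp only [dot, det] at this ⊢
      linarith
  · push Not at hA
    exact ⟨(1, 0), by simp, fun u hu => by simp [hA u hu, dot]⟩

theorem eventually_add_smul_mem_polarDual (S : Finset (ℝ × ℝ)) {w d : ℝ × ℝ}
    (hw : w ∈ polarDual S) (hd : ∀ u ∈ S, dot u w = -1 → dot u d = 0) :
    ∀ᶠ s in 𝓝 (0 : ℝ), w + s • d ∈ polarDual S := by
  simp only [polarDual, Finset.mem_coe, Set.mem_ofPred_eq, eventually_all_finset]
  intro u hu
  rcases (hw u hu).eq_or_lt with htight | hslack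
  · exact Eventually.of_forall fun s => by simp [← htight, hd u hu htight.symm]
  · have hcont : Continuous fun s : ℝ => dot u (w + s • d) := by
      unfold dot; fun_prop
    have := (hcont.tendsto 0).eventually_const_lt (by simpa using hslack)
    exact this.mono fun _ h => h.le

theorem exists_tight_det_ne_zero (S : Finset (ℝ × ℝ)) {w : ℝ × ℝ}
    (hw : w ∈ (polarDual S).extremePoints ℝ) :
    ∃ u ∈ S, ∃ v ∈ S, dot u w = -1 ∧ dot v w = -1 ∧ det u v ≠ 0 := by
  by_contra! h
  obtain ⟨d, hd0, hd⟩ := exists_ne_zero_forall_dot_eq_zero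
    (A := {u | u ∈ S ∧ dot u w = -1}) fun u hu v hv => h u hu.1 v hv.1 hu.2 hv.2
  have hev := eventually_add_smul_mem_polarDual S hw.1 fun u hu huw => hd u ⟨hu, huw⟩
  have hev' : ∀ᶠ s in 𝓝 (0 : ℝ), w + (-s) • d ∈ polarDual S :=
    (continuous_neg.tendsto' 0 0 neg_zero).eventually hev
  obtain ⟨ε, hε, hplus, hminus⟩ := (hev.and hev').exists_gt
  have hseg : w ∈ openSegment ℝ (w + ε • d) (w + (-ε) • d) :=
    ⟨1 / 2, 1 / 2, by norm_num, by norm_num, by norm_num, by module⟩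
  have hfix : w + ε • d = w := hw.2 hplus hminus hseg
  exact hd0 ((smul_eq_zero.1 (add_eq_left.1 hfix)).resolve_left hε.ne')

theorem eq_zero_of_forall_dot_nonneg {p : ℝ × ℝ} {U : Set (ℝ × ℝ)} (hU : U ∈ 𝓝 0)
    (h : ∀ v ∈ U, 0 ≤ dot p v) : p = 0 := by
  have hev : ∀ᶠ s in 𝓝 (0 : ℝ), (-s) • p ∈ U :=
    ((continuous_neg.smul continuous_const).tendsto' 0 0 (by simp)).eventually hU
  obtain ⟨s, hs, hsU⟩ := hev.exists_gt
  have hp : dot p p ≤ 0 := by nlinarith [dot_smul_right p p (-s), h _ hsU]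
  unfold dot at hp
  ext <;> simp only [Prod.fst_zero, Prod.snd_zero] <;> nlinarith

theorem eq_zero_of_mem_interior_of_polarDual_eq_convexHull {Δ : Set (ℝ × ℝ)}
    {T : Finset (ℝ × ℝ)} (hT : ∀ t ∈ T, IsLatticePt t)
    (hΔT : polarDual Δ = convexHull ℝ (T : Set (ℝ × ℝ))) (hnhds : polarDual Δ ∈ 𝓝 0)
    {p : ℝ × ℝ} (hp : p ∈ interior Δ) (hpl : IsLatticePt p) : p = 0 := by
  obtain ⟨ε, hε, hεp⟩ : ∃ ε : ℝ, 0 < ε ∧ (1 + ε) • p ∈ Δ := by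
    have hcont : Continuous fun ε : ℝ => (1 + ε) • p := by fun_prop
    have : Tendsto (fun ε : ℝ => (1 + ε) • p) (𝓝 0) (𝓝 p) := by
      simpa using hcont.tendsto 0
    exact (this.eventually (mem_interior_iff_mem_nhds.1 hp)).exists_gt
  have hT_nonneg : ∀ t ∈ T, 0 ≤ dot p t := by
    intro t ht
    obtain ⟨k, hk⟩ := exists_dot_eq_intCast hpl (hT t ht)
    have htΔ : t ∈ polarDual Δ := hΔT ▸ subset_convexHull ℝ _ ht
    have h₁ := htΔ _ hεp
    rw [dot_smul_left, hk] at h₁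
    have hk0 : 0 ≤ k := by
      have : (-1 : ℝ) < k := by
        by_contra! hk1
        nlinarith
      have : (-1 : ℤ) < k := by exact_mod_cast this
      omega
    rw [hk]
    exact_mod_cast hk0
  refine eq_zero_of_forall_dot_nonneg hnhds fun v hv => ?_
  rw [hΔT] at hv
  exact convexHull_min hT_nonneg (convex_halfSpace_ge (isLinearMap_dot_right p) 0) hv

theorem exists_finset_polarDual_eq_convexHull {S : Finset (ℝ × ℝ)}
    (hS : ∀ p ∈ S, IsLatticePt p) (h0 : (0 : ℝ × ℝ) ∈ interior (convexHull ℝ (S : Set (ℝ × ℝ))))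
    (huniq : ∀ p ∈ interior (convexHull ℝ (S : Set (ℝ × ℝ))), IsLatticePt p → p = 0) :
    ∃ T : Finset (ℝ × ℝ), (∀ p ∈ T, IsLatticePt p) ∧
      polarDual (convexHull ℝ (S : Set (ℝ × ℝ))) = convexHull ℝ (T : Set (ℝ × ℝ)) := by
  have hKcomp : IsCompact (polarDual (S : Set (ℝ × ℝ))) := by
    rw [← polarDual_convexHull]
    exact Metric.isCompact_of_isClosed_isBounded (isClosed_polarDual _) (isBounded_polarDual h0)
  rw [polarDual_convexHull]
  set K := polarDual (S : Set (ℝ × ℝ))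
  have hKconv : Convex ℝ K := convex_polarDual _
  have hext : K.extremePoints ℝ ⊆ {p | IsLatticePt p} := by
    intro w hw
    obtain ⟨u, hu, v, hv, huw, hvw, hdet⟩ := exists_tight_det_ne_zero S hw
    exact isLatticePt_of_dot_eq_neg_one (convex_convexHull ℝ _) h0 huniq
      (subset_convexHull ℝ _ hu) (subset_convexHull ℝ _ hv) (hS u hu) (hS v hv) hdet huw hvw
  have hfin := hKcomp.finite_setOf_isLatticePt
  refine ⟨hfin.toFinset, fun p hp => (hfin.mem_toFinset.1 hp).2, ?_⟩
  rw [hfin.coe_toFinset]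
  refine subset_antisymm ?_ (convexHull_min (fun p hp => hp.1) hKconv)
  calc K = closure (convexHull ℝ (K.extremePoints ℝ)) :=
        (closure_convexHull_extremePoints hKcomp hKconv).symm
    _ ⊆ closure (convexHull ℝ {p ∈ K | IsLatticePt p}) :=
        closure_mono (convexHull_mono fun w hw => ⟨hw.1, hext hw⟩)
    _ = convexHull ℝ {p ∈ K | IsLatticePt p} :=
        (hfin.isCompact_convexHull ℝ).isClosed.closure_eq

end LatticePolygon

open LatticePolygon in
/-- A two-dimensional convex lattice polygon `Δ` containing the origin in its interior is
reflexive (its polar dual `{v | ∀ u ∈ Δ, ⟪u,v⟫ ≥ -1}` is again a lattice polygon, i.e. the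
convex hull of finitely many lattice points) iff the origin is the unique interior lattice
point of `Δ`. -/
theorem stmt0 (S : Finset (ℝ × ℝ)) (hS : ∀ p ∈ S, IsLatticePt p)
    (Δ : Set (ℝ × ℝ)) (hΔ : Δ = convexHull ℝ (S : Set (ℝ × ℝ)))
    (h0 : (0 : ℝ × ℝ) ∈ interior Δ) :
    (∃ T : Finset (ℝ × ℝ), (∀ p ∈ T, IsLatticePt p) ∧
        {v : ℝ × ℝ | ∀ u ∈ Δ, u.1 * v.1 + u.2 * v.2 ≥ -1}
          = convexHull ℝ (T : Set (ℝ × ℝ)))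
      ↔ {p ∈ interior Δ | IsLatticePt p} = {(0 : ℝ × ℝ)} := by
  subst hΔ
  constructor
  · rintro ⟨T, hT, hΔT⟩
    have hnhds : polarDual (convexHull ℝ (S : Set (ℝ × ℝ))) ∈ 𝓝 0 := by
      rw [polarDual_convexHull]
      exact polarDual_finset_mem_nhds_zero S
    refine Set.Subset.antisymm (fun p ⟨hp, hpl⟩ => ?_) ?_
    · exact eq_zero_of_mem_interior_of_polarDual_eq_convexHull hT hΔT hnhds hp hpl
    · rintro _ rfl
      exact ⟨h0, 0, 0, by ext <;> simp⟩
  · intro h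
    exact exists_finset_polarDual_eq_convexHull hS h0 fun p hp hpl => h.subset ⟨hp, hpl⟩
end

section
/- Let d ≥ 3 and let v₁, …, v_d ∈ ℤ² be pairwise distinct primitive vectors listed in strictly counterclockwise cyclic order (so that going from each vᵢ to v_{i+1}, indices mod d, one traverses a positive angle, and the total turning is one full revolution), satisfying det(vᵢ, v_{i+1}) = 1 for all i (indices mod d). Then for each i there is a unique integer cᵢ with v_{i−1} + v_{i+1} = cᵢ·vᵢ, and the sum satisfies Σ_{i=1}^{d} cᵢ = 3d − 12. -/
/-!
Index the rays `d`-periodically by `ℤ` and put `c t = det (v (t - 1)) (v (t + 1))`, which is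
the unique integer with `v (t - 1) + v (t + 1) = c t • v t`. For `d = 3` and `d = 4` the sum is
computed directly. For `d ≥ 5` some `c t = 1`, and contracting that ray yields a fan with `d - 1`
rays and sum smaller by `3`, so induction on `d` concludes.

To find `c t = 1`, note that the `d` sums of two consecutive turns add up to `4π < dπ`, so some
`c (a + 1) > 0`. The heights `Q u = det (v a) (v (a + u))` satisfy
`Q (u - 1) + Q (u + 1) = c (a + u) * Q u`; without a coefficient `1` they increase strictly while
positive and, read backwards from `a + d`, while negative. Where `Q` changes sign (after half a
turn) both adjacent coefficients would then have to be `≤ -1`, which makes `Q` positive again two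
steps later; an antipodal pair of rays (`c t = 0`) is excluded by the same growth argument.
-/

open Finset Real

def det (u w : ℤ × ℤ) : ℤ := u.1 * w.2 - u.2 * w.1

@[simp] lemma det_self (u : ℤ × ℤ) : det u u = 0 := by unfold det; ring

lemma det_swap (u w : ℤ × ℤ) : det w u = -det u w := by unfold det; ring

lemma det_add_left (u u' w : ℤ × ℤ) : det (u + u') w = det u w + det u' w := by
  simp only [det, Prod.fst_add, Prod.snd_add]; ring

lemma det_add_right (u w w' : ℤ × ℤ) : det u (w + w') = det u w + det u w' := by
  simp only [det, Prod.fst_add, Prod.snd_add]; ring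

lemma det_sub_left (u u' w : ℤ × ℤ) : det (u - u') w = det u w - det u' w := by
  simp only [det, Prod.fst_sub, Prod.snd_sub]; ring

lemma det_sub_right (u w w' : ℤ × ℤ) : det u (w - w') = det u w - det u w' := by
  simp only [det, Prod.fst_sub, Prod.snd_sub]; ring

lemma det_neg_right (u w : ℤ × ℤ) : det u (-w) = -det u w := by
  simp only [det, Prod.fst_neg, Prod.snd_neg]; ring

lemma det_smul_left (k : ℤ) (u w : ℤ × ℤ) : det (k • u) w = k * det u w := by
  simp only [det, Prod.smul_fst, Prod.smul_snd, smul_eq_mul]; ring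

lemma det_smul_right (k : ℤ) (u w : ℤ × ℤ) : det u (k • w) = k * det u w := by
  simp only [det, Prod.smul_fst, Prod.smul_snd, smul_eq_mul]; ring

/-- The backward direction is the plane Plücker relation
`det b c • a + det c a • b + det a b • c = 0`. -/
lemma add_eq_smul_iff {a b c : ℤ × ℤ} (hab : det a b = 1) (hbc : det b c = 1) (k : ℤ) :
    a + c = k • b ↔ k = det a c := by
  constructor
  · intro h
    have := congrArg (det · c) h
    simp only [det_add_left, det_self, det_smul_left, hbc] at this
    linarith
  · rintro rfl
    simp only [det] at hab hbc ⊢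
    ext <;> simp only [Prod.fst_add, Prod.snd_add, Prod.smul_fst, Prod.smul_snd, smul_eq_mul]
    · linear_combination (-a.1) * hbc - c.1 * hab
    · linear_combination (-a.2) * hbc - c.2 * hab

lemma Function.Periodic.sum_range_add {M : Type*} [AddCommMonoid M] {f : ℤ → M} {d : ℕ}
    (hf : Function.Periodic f d) (i : ℤ) :
    ∑ t ∈ range d, f (t + i) = ∑ t ∈ range d, f t := by
  have step : ∀ g : ℤ → M, Function.Periodic g d →
      ∑ t ∈ range d, g (t + 1) = ∑ t ∈ range d, g t := by
    intro g hg
    cases d with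
    | zero => simp
    | succ n =>
      rw [sum_range_succ, sum_range_succ' (fun t : ℕ => g t)]
      have := hg 0
      push_cast at this ⊢
      rw [zero_add] at this
      rw [this]
  induction i using Int.induction_on with
  | zero => simp
  | succ i ih =>
    rw [← ih, ← step _ (hf.add_const i)]
    congr! 2; ring
  | pred i ih =>
    rw [← ih, ← step _ (hf.add_const (-(i : ℤ) - 1))]
    congr! 2; ring

/-- While `Q` stays positive, `γ ≠ 1` forces `γ ≥ 2`, so `Q` keeps increasing; hence it can
only become nonpositive after a step with `γ ≤ 0`. -/
lemma coeff_nonpos_of_pos_run {Q γ : ℤ → ℤ} {m : ℤ} (hm : 1 ≤ m)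
    (hrec : ∀ u, 0 < u → u ≤ m → Q (u - 1) + Q (u + 1) = γ u * Q u)
    (hγ : ∀ u, 0 < u → u ≤ m → γ u ≠ 1) (h₀ : 0 ≤ Q 0) (h₀₁ : Q 0 < Q 1)
    (hpos : ∀ u, 0 < u → u ≤ m → 0 < Q u) (hend : Q (m + 1) ≤ 0) : γ m ≤ 0 := by
  have hnonneg : ∀ u, 0 ≤ u → u ≤ m → 0 ≤ Q u := fun u hu hum => by
    rcases hu.eq_or_lt with rfl | hu
    exacts [h₀, (hpos u hu hum).le]
  have hinc : ∀ u, 0 ≤ u → u < m → Q u < Q (u + 1) := by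
    intro u hu
    induction u, hu using Int.leInduction with
    | base => exact fun _ => by simpa using h₀₁
    | succ u hu ih =>
      intro hum
      have hrec' := hrec (u + 1) (by omega) (by omega)
      rw [add_sub_cancel_right] at hrec'
      have := ih (by omega)
      have := hnonneg u hu (by omega)
      have := hpos (u + 1 + 1) (by omega) (by omega)
      have := hγ (u + 1) (by omega) (by omega)
      rcases (show 2 ≤ γ (u + 1) ∨ γ (u + 1) ≤ 0 by omega) with h | h <;> nlinarith
  have hlt := hinc (m - 1) (by omega) (by omega)
  rw [sub_add_cancel] at hlt
  have := hrec m (by omega) le_rfl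
  have := hpos m (by omega) le_rfl
  by_contra! h
  nlinarith

lemma coeff_nonpos_of_neg_run {Q γ : ℤ → ℤ} {k e : ℤ} (hke : k + 1 < e)
    (hrec : ∀ u, k < u → u < e → Q (u - 1) + Q (u + 1) = γ u * Q u)
    (hγ : ∀ u, k < u → u < e → γ u ≠ 1) (he : Q e ≤ 0) (he₁ : Q (e - 1) < Q e)
    (hneg : ∀ u, k < u → u < e → Q u < 0) (hk : 0 ≤ Q k) : γ (k + 1) ≤ 0 := by
  have := coeff_nonpos_of_pos_run (Q := fun w => -Q (e - w)) (γ := fun w => γ (e - w))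
    (m := e - k - 1) (by omega)
    (fun w hw hwm => by
      have := hrec (e - w) (by omega) (by omega)
      rw [show e - (w - 1) = e - w + 1 by ring, show e - (w + 1) = e - w - 1 by ring]
      linear_combination -this)
    (fun w hw hwm => hγ _ (by omega) (by omega)) (by simpa using he) (by simpa using he₁)
    (fun w hw hwm => neg_pos.2 (hneg _ (by omega) (by omega)))
    (by simpa [show e - (e - k - 1 + 1) = k by ring] using hk)
  simpa [show e - (e - k - 1) = k + 1 by ring] using this

/-- The rays of a smooth complete fan in `ℤ²`, listed counterclockwise as a `d`-periodic
sequence `v`, with polar angles lifted to a strictly increasing sequence `θ` that gains `2π`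
per period. -/
structure SmoothCompleteFan (d : ℕ) where
  v : ℤ → ℤ × ℤ
  r : ℤ → ℝ
  θ : ℤ → ℝ
  v_add_period : ∀ t, v (t + d) = v t
  θ_add_period : ∀ t, θ (t + d) = θ t + 2 * π
  θ_strictMono : StrictMono θ
  r_pos : ∀ t, 0 < r t
  v_polar : ∀ t, ((v t).1 : ℝ) = r t * cos (θ t) ∧ ((v t).2 : ℝ) = r t * sin (θ t)
  det_succ : ∀ t, det (v t) (v (t + 1)) = 1

namespace SmoothCompleteFan

variable {d : ℕ} (F : SmoothCompleteFan d)

def c (t : ℤ) : ℤ := det (F.v (t - 1)) (F.v (t + 1))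

lemma det_pred (t : ℤ) : det (F.v (t - 1)) (F.v t) = 1 := by
  simpa using F.det_succ (t - 1)

lemma v_pred_add_v_succ (t : ℤ) : F.v (t - 1) + F.v (t + 1) = F.c t • F.v t :=
  (add_eq_smul_iff (F.det_pred t) (F.det_succ t) _).2 rfl

lemma periodic_c : Function.Periodic F.c d := fun t => by
  rw [c, c, add_sub_right_comm, add_right_comm, F.v_add_period, F.v_add_period]

lemma three_le (F : SmoothCompleteFan d) : 3 ≤ d := by
  by_contra! h
  obtain rfl | rfl | rfl : d = 0 ∨ d = 1 ∨ d = 2 := by omega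
  · have := F.θ_add_period 0
    simp only [CharP.cast_eq_zero, add_zero] at this
    linarith [pi_pos]
  · have h1 := F.det_succ 0
    rw [show (0 : ℤ) + 1 = 0 + (1 : ℕ) by simp, F.v_add_period] at h1
    simp at h1
  · have h1 := F.det_succ 0
    have h2 := F.det_succ 1
    rw [show (1 : ℤ) + 1 = 0 + (2 : ℕ) by simp, F.v_add_period, det_swap] at h2
    simp only [zero_add] at h1
    omega

lemma c_eq_neg_one (F : SmoothCompleteFan 3) (t : ℤ) : F.c t = -1 := by
  rw [c, ← F.v_add_period (t - 1), det_swap]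
  simpa [show t - 1 + 3 = t + 1 + 1 by ring] using F.det_succ (t + 1)

lemma c_add_two (F : SmoothCompleteFan 4) (t : ℤ) : F.c (t + 2) = -F.c t := by
  rw [c, c, ← F.v_add_period (t - 1), det_swap]
  congr 3 <;> push_cast <;> ring

def height (a u : ℤ) : ℤ := det (F.v a) (F.v (a + u))

lemma height_zero (a : ℤ) : F.height a 0 = 0 := by simp [height]

lemma height_one (a : ℤ) : F.height a 1 = 1 := F.det_succ a

lemma height_neg_one (a : ℤ) : F.height a (-1) = -1 := by
  rw [height, det_swap, ← sub_eq_add_neg, F.det_pred]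

lemma height_add_period (a u : ℤ) : F.height a (u + d) = F.height a u := by
  rw [height, ← add_assoc, F.v_add_period]; rfl

lemma height_period (a : ℤ) : F.height a d = 0 := by
  rw [← zero_add (d : ℤ), height_add_period, height_zero]

lemma height_two (a : ℤ) : F.height a 2 = F.c (a + 1) := by
  simp only [height, c, add_sub_cancel_right]; congr 2; ring

lemma height_pred_add_height_succ (a u : ℤ) :
    F.height a (u - 1) + F.height a (u + 1) = F.c (a + u) * F.height a u := by
  simp only [height, ← det_add_right, ← add_sub_assoc, ← add_assoc, F.v_pred_add_v_succ,
    det_smul_right]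

lemma det_eq_mul_sin (s t : ℤ) :
    (det (F.v s) (F.v t) : ℝ) = F.r s * F.r t * sin (F.θ t - F.θ s) := by
  obtain ⟨hs₁, hs₂⟩ := F.v_polar s
  obtain ⟨ht₁, ht₂⟩ := F.v_polar t
  rw [det, Int.cast_sub, Int.cast_mul, Int.cast_mul, hs₁, hs₂, ht₁, ht₂, sin_sub]
  ring

lemma det_pos_of_lt_add_pi {s t : ℤ} (hst : s < t) (hπ : F.θ t < F.θ s + π) :
    0 < det (F.v s) (F.v t) := by
  have hsin := sin_pos_of_pos_of_lt_pi (sub_pos.2 (F.θ_strictMono hst)) (by linarith)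
  have : (0 : ℝ) < det (F.v s) (F.v t) := by
    rw [det_eq_mul_sin]; have := F.r_pos s; have := F.r_pos t; positivity
  exact_mod_cast this

lemma det_nonpos_of_add_pi_le {s t : ℤ} (hπ : F.θ s + π ≤ F.θ t)
    (h2π : F.θ t < F.θ s + 2 * π) : det (F.v s) (F.v t) ≤ 0 := by
  have hsin : sin (F.θ t - F.θ s) ≤ 0 := by
    rw [← sin_sub_two_pi]; exact sin_nonpos_of_nonpos_of_neg_pi_le (by linarith) (by linarith)
  have : (det (F.v s) (F.v t) : ℝ) ≤ 0 := by
    rw [det_eq_mul_sin]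
    exact mul_nonpos_of_nonneg_of_nonpos (mul_pos (F.r_pos s) (F.r_pos t)).le hsin
  exact_mod_cast this

lemma det_neg_of_add_pi_lt {s t : ℤ} (hπ : F.θ s + π < F.θ t)
    (h2π : F.θ t < F.θ s + 2 * π) : det (F.v s) (F.v t) < 0 := by
  have hsin : sin (F.θ t - F.θ s) < 0 := by
    rw [← sin_sub_two_pi]; exact sin_neg_of_neg_of_neg_pi_lt (by linarith) (by linarith)
  have : (det (F.v s) (F.v t) : ℝ) < 0 := by
    rw [det_eq_mul_sin]
    exact mul_neg_of_pos_of_neg (mul_pos (F.r_pos s) (F.r_pos t)) hsin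
  exact_mod_cast this

lemma θ_lt_add_two_pi {a u : ℤ} (hu : u < d) : F.θ (a + u) < F.θ a + 2 * π := by
  rw [← F.θ_add_period]; exact F.θ_strictMono (by linarith)

lemma exists_c_pos (hd : 5 ≤ d) : ∃ s, 0 < F.c s := by
  have hturn : ∑ t ∈ range d, (F.θ (t + 1) - F.θ (t - 1)) = 4 * π := by
    have h₀ := F.θ_add_period 0
    have h₁ := F.θ_add_period (-1)
    rw [zero_add] at h₀
    rw [neg_add_eq_sub] at h₁
    calc ∑ t ∈ range d, (F.θ (t + 1) - F.θ (t - 1))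
        = ∑ t ∈ range d, ((F.θ (t + 1) + F.θ t) - (F.θ t + F.θ (t - 1))) :=
          sum_congr rfl fun _ _ => by ring
      _ = F.θ d + F.θ (d - 1) - (F.θ 0 + F.θ (-1)) := by
          simpa using sum_range_sub (fun t : ℕ => F.θ t + F.θ (t - 1)) d
      _ = 4 * π := by linarith
  obtain ⟨s, -, hs⟩ : ∃ s ∈ range d, F.θ (s + 1) - F.θ (s - 1) < π := by
    by_contra! h
    have := card_nsmul_le_sum _ _ _ h
    rw [hturn, card_range, nsmul_eq_mul] at this
    have : (5 : ℝ) ≤ d := by exact_mod_cast hd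
    nlinarith [pi_pos]
  exact ⟨s, F.det_pos_of_lt_add_pi (by omega) (by linarith)⟩

/-- `m` is the last step after `a` that turns by less than a half-turn. -/
lemma exists_half_turn (a : ℤ) : ∃ m : ℤ, m + 2 ≤ d ∧
    (∀ u, 0 < u → u ≤ m → 0 < F.height a u) ∧
    (∀ u, m < u → u < d → F.height a u ≤ 0) ∧
    (∀ u, m + 1 < u → u < d → F.height a u < 0) := by
  have hbdd : ∀ u, F.θ (a + u) < F.θ a + π → u ≤ d := fun u hu => by
    by_contra! hdu
    have := F.θ_strictMono.monotone (show a + d ≤ a + u by omega)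
    rw [F.θ_add_period] at this
    linarith [pi_pos]
  obtain ⟨m, hm, hmax⟩ := Int.exists_greatest_of_bdd ⟨d, hbdd⟩ ⟨0, by simp [pi_pos]⟩
  have hge : ∀ u, m < u → F.θ a + π ≤ F.θ (a + u) := fun u hu =>
    not_lt.1 fun h => (hmax u h).not_gt hu
  have hpos : ∀ u, 0 < u → u ≤ m → 0 < F.height a u := fun u hu hum =>
    F.det_pos_of_lt_add_pi (by omega) ((F.θ_strictMono.monotone (by omega)).trans_lt hm)
  refine ⟨m, ?_, hpos, fun u hmu hud => ?_, fun u hmu hud => ?_⟩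
  · by_contra! hmd
    have := hpos (d - 1) (by have := F.three_le; omega) (by omega)
    rw [show (d : ℤ) - 1 = -1 + d by ring, F.height_add_period, height_neg_one] at this
    omega
  · exact F.det_nonpos_of_add_pi_le (hge u hmu) (F.θ_lt_add_two_pi hud)
  · exact F.det_neg_of_add_pi_lt ((hge (m + 1) (by omega)).trans_lt (F.θ_strictMono (by omega)))
      (F.θ_lt_add_two_pi hud)

lemma c_ne_zero_of_forall_c_ne_one (hd : 5 ≤ d) (h₁ : ∀ t, F.c t ≠ 1) (t : ℤ) :
    F.c t ≠ 0 := by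
  intro h₀
  set a := t + 1
  have hanti : F.height a (d - 2) = 0 := by
    have := F.v_pred_add_v_succ t
    rw [h₀, zero_smul, add_eq_zero_iff_eq_neg] at this
    rw [height, show a + (d - 2) = t - 1 + d by ring, F.v_add_period, this, det_neg_right,
      det_self, neg_zero]
  obtain ⟨m, -, hpos, -, hneg⟩ := F.exists_half_turn a
  have hm : m + 1 = d - 2 := by
    have hle : ¬ d - 2 ≤ m := fun h => (hpos (d - 2) (by omega) h).ne' hanti
    have hlt : ¬ m + 1 < d - 2 := fun h => (hneg (d - 2) h (by omega)).ne hanti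
    omega
  have hc := coeff_nonpos_of_pos_run (Q := F.height a) (γ := fun u => F.c (a + u)) (by omega)
    (fun u _ _ => F.height_pred_add_height_succ a u) (fun u _ _ => h₁ _) (F.height_zero a).ge
    (by rw [height_zero, height_one]; exact one_pos) hpos (by rw [hm, hanti])
  have hrec := F.height_pred_add_height_succ a m
  rw [hm, hanti] at hrec
  have := hpos (m - 1) (by omega) (by omega)
  have := hpos m (by omega) le_rfl
  nlinarith

lemma false_of_forall_c_ne_zero_one (hd : 5 ≤ d) (h : ∀ t, F.c t ≠ 0 ∧ F.c t ≠ 1) :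
    False := by
  obtain ⟨s, hs⟩ := F.exists_c_pos hd
  set a := s - 1
  have hrec := F.height_pred_add_height_succ a
  obtain ⟨m, hmd, hpos, hnonpos, hneg⟩ := F.exists_half_turn a
  have hm2 : 2 ≤ m := by
    by_contra! hm
    have := hnonpos 2 (by omega) (by omega)
    rw [height_two, show a + 1 = s by ring] at this
    omega
  have hA : F.c (a + m) ≤ -1 := by
    have := coeff_nonpos_of_pos_run (Q := F.height a) (γ := fun u => F.c (a + u)) (by omega)
      (fun u _ _ => hrec u) (fun u _ _ => (h _).2) (F.height_zero a).ge
      (by rw [height_zero, height_one]; exact one_pos) hpos (hnonpos _ (by omega) (by omega))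
    have := (h (a + m)).1
    omega
  have hQm := hpos m (by omega) le_rfl
  have hQm₁ := hpos (m - 1) (by omega) (by omega)
  have hQm1 : F.height a (m + 1) ≤ -F.height a m - F.height a (m - 1) := by
    have := mul_le_mul_of_nonneg_right hA hQm.le
    linarith [hrec m]
  have hB : F.c (a + (m + 1)) ≤ -1 := by
    have := coeff_nonpos_of_neg_run (Q := F.height a) (γ := fun u => F.c (a + u)) (e := d)
      (by omega) (fun u _ _ => hrec u) (fun u _ _ => (h _).2)
      (F.height_period a).le
      (by rw [show (d : ℤ) - 1 = -1 + d by ring, F.height_add_period, height_neg_one,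
        F.height_period]; exact neg_one_lt_zero)
      (fun u hmu hud => by
        rcases (show u = m + 1 ∨ m + 1 < u by omega) with rfl | hu
        · linarith
        · exact hneg u hu hud)
      hQm.le
    have := (h (a + (m + 1))).1
    omega
  have hQm2 : F.height a (m + 2) ≤ 0 := by
    rcases (show m + 2 = d ∨ m + 2 < d by omega) with hm' | hm'
    · rw [hm', F.height_period]
    · exact (hneg _ (by omega) hm').le
  have := mul_le_mul_of_nonpos_right hB (by linarith : F.height a (m + 1) ≤ 0)
  have := hrec (m + 1)
  rw [add_sub_cancel_right, add_assoc, one_add_one_eq_two] at this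
  linarith

lemma exists_c_eq_one (hd : 5 ≤ d) : ∃ t, F.c t = 1 := by
  by_contra! h₁
  exact F.false_of_forall_c_ne_zero_one hd
    fun t => ⟨F.c_ne_zero_of_forall_c_ne_one hd h₁ t, h₁ t⟩

def shift (i : ℤ) : SmoothCompleteFan d where
  v t := F.v (t + i)
  r t := F.r (t + i)
  θ t := F.θ (t + i)
  v_add_period t := by rw [add_right_comm, F.v_add_period]
  θ_add_period t := by rw [add_right_comm, F.θ_add_period]
  θ_strictMono := F.θ_strictMono.comp fun _ _ h => add_lt_add_left h i
  r_pos t := F.r_pos (t + i)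
  v_polar t := F.v_polar (t + i)
  det_succ t := by rw [add_right_comm, F.det_succ]

lemma c_shift (i t : ℤ) : (F.shift i).c t = F.c (t + i) := by
  simp only [c, shift, sub_add_eq_add_sub, add_right_comm t 1 i]

lemma sum_c_shift (i : ℤ) : ∑ t ∈ range d, (F.shift i).c t = ∑ t ∈ range d, F.c t := by
  simp only [c_shift]
  exact F.periodic_c.sum_range_add i

end SmoothCompleteFan

/-- The increasing enumeration of `ℤ ∖ (n + 1)ℤ` that sends `0` to `1`. -/
def skipMultiples (n : ℕ) (t : ℤ) : ℤ := t + t / n + 1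

section skipMultiples

variable {n : ℕ}

lemma skipMultiples_add (hn : 0 < n) (t : ℤ) :
    skipMultiples n (t + n) = skipMultiples n t + (n + 1 : ℕ) := by
  rw [skipMultiples, skipMultiples, Int.add_ediv_of_dvd_right dvd_rfl, Int.ediv_self (by omega)]
  push_cast; ring

lemma skipMultiples_of_lt {t : ℤ} (h₀ : 0 ≤ t) (h : t < n) : skipMultiples n t = t + 1 := by
  simp [skipMultiples, Int.ediv_eq_zero_of_lt h₀ h]

lemma skipMultiples_neg_one (hn : 0 < n) : skipMultiples n (-1) = -1 := by
  have := skipMultiples_add hn (-1)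
  rw [skipMultiples_of_lt (by omega) (by omega)] at this
  push_cast at this
  linarith

lemma skipMultiples_self (hn : 0 < n) : skipMultiples n n = n + 2 := by
  have := skipMultiples_add hn 0
  rw [zero_add, skipMultiples_of_lt le_rfl (by omega)] at this
  push_cast at this
  linarith

lemma strictMono_skipMultiples (hn : 0 < n) : StrictMono (skipMultiples n) :=
  strictMono_int_of_lt_succ fun t => by
    have := Int.ediv_le_ediv (c := n) (by omega) (Int.le_add_one (le_refl t))
    simp only [skipMultiples]
    omega

end skipMultiples

namespace SmoothCompleteFan

variable {n : ℕ}

lemma pos_of_succ (F : SmoothCompleteFan (n + 1)) : 0 < n := by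
  have := F.three_le; omega

lemma v_neg_one_of_c_zero_eq_one {F : SmoothCompleteFan (n + 1)} (h : F.c 0 = 1) :
    F.v (-1) = F.v 0 - F.v 1 := by
  have := F.v_pred_add_v_succ 0
  rw [h, one_smul, zero_sub, zero_add] at this
  exact eq_sub_of_add_eq this

/-- Contracting the ray `v 0 = v (-1) + v 1`: the fan keeps the rays `F.v t`, `t ∉ (n + 1)ℤ`. -/
def blowDown (F : SmoothCompleteFan (n + 1)) (h : F.c 0 = 1) : SmoothCompleteFan n where
  v := F.v ∘ skipMultiples n
  r := F.r ∘ skipMultiples n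
  θ := F.θ ∘ skipMultiples n
  v_add_period t := by
    simp only [Function.comp_apply, skipMultiples_add F.pos_of_succ, F.v_add_period]
  θ_add_period t := by
    simp only [Function.comp_apply, skipMultiples_add F.pos_of_succ, F.θ_add_period]
  θ_strictMono := F.θ_strictMono.comp (strictMono_skipMultiples F.pos_of_succ)
  r_pos t := F.r_pos _
  v_polar t := F.v_polar _
  det_succ t := by
    have hn := F.pos_of_succ
    have hper : Function.Periodic
        (fun t => det (F.v (skipMultiples n t)) (F.v (skipMultiples n (t + 1)))) n := fun t => by
      simp only [add_right_comm t (n : ℤ) 1, skipMultiples_add hn, F.v_add_period]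
    obtain ⟨y, ⟨hy₀, hyn⟩, hy⟩ := hper.exists_mem_Ico₀ (by exact_mod_cast hn) t
    simp only [Function.comp_apply] at hy ⊢
    rw [hy, skipMultiples_of_lt hy₀ hyn]
    rcases (show y + 1 < n ∨ y + 1 = n by omega) with hy₁ | hy₁
    · rw [skipMultiples_of_lt (by omega) hy₁]
      exact F.det_succ _
    · rw [hy₁, skipMultiples_self hn, show (n : ℤ) = -1 + (n + 1 : ℕ) by push_cast; ring,
        F.v_add_period, show -1 + ((n + 1 : ℕ) : ℤ) + 2 = 1 + (n + 1 : ℕ) by push_cast; ring,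
        F.v_add_period]
      simpa [c] using h

variable (F : SmoothCompleteFan (n + 1)) (h : F.c 0 = 1)

lemma c_blowDown (t : ℤ) : (F.blowDown h).c t =
    det (F.v (skipMultiples n (t - 1))) (F.v (skipMultiples n (t + 1))) := rfl

lemma c_blowDown_zero : (F.blowDown h).c 0 = F.c 1 - 1 := by
  have := F.three_le
  rw [c_blowDown, zero_sub, zero_add, skipMultiples_neg_one F.pos_of_succ,
    skipMultiples_of_lt zero_le_one (by omega), v_neg_one_of_c_zero_eq_one h, det_sub_left,
    F.det_succ 1]
  simp [c]

lemma c_blowDown_of_lt {t : ℤ} (h₀ : 0 < t) (ht : t + 1 < n) :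
    (F.blowDown h).c t = F.c (t + 1) := by
  rw [c_blowDown, skipMultiples_of_lt (by omega) (by omega),
    skipMultiples_of_lt (by omega) ht, c, add_sub_cancel_right, sub_add_cancel]

lemma c_blowDown_pred : (F.blowDown h).c (n - 1) = F.c n - 1 := by
  have := F.three_le
  have hv : F.v (n + 2) = F.v (n + 1) - F.v n := by
    have h₁ := F.v_add_period 1
    have h₀ := F.v_add_period 0
    have hm₁ := F.v_add_period (-1)
    push_cast at h₁ h₀ hm₁
    rw [show (n : ℤ) + 2 = 1 + (n + 1) by ring, h₁, show (n : ℤ) + 1 = 0 + (n + 1) by ring,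
      h₀, show (n : ℤ) = -1 + (n + 1) by ring, hm₁, v_neg_one_of_c_zero_eq_one h]
    abel
  rw [c_blowDown, sub_add_cancel, skipMultiples_self F.pos_of_succ,
    skipMultiples_of_lt (by omega) (by omega), sub_sub, one_add_one_eq_two, hv, det_sub_right,
    show (n : ℤ) - 2 + 1 = n - 1 by ring, F.det_pred, c]

lemma sum_c_blowDown :
    ∑ t ∈ range n, (F.blowDown h).c t = ∑ t ∈ range (n + 1), F.c t - 3 := by
  obtain ⟨k, rfl⟩ : ∃ k, n = k + 2 := ⟨n - 2, by have := F.three_le; omega⟩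
  have hmid : ∀ j ∈ range k, (F.blowDown h).c (j + 1 : ℕ) = F.c (j + 2 : ℕ) := by
    intro j hj
    have := mem_range.1 hj
    rw [c_blowDown_of_lt F h (by omega) (by omega)]
    push_cast; ring_nf
  have hlast : (F.blowDown h).c (k + 1 : ℕ) = F.c (k + 2 : ℕ) - 1 := by
    rw [show ((k + 1 : ℕ) : ℤ) = (k + 2 : ℕ) - 1 by push_cast; ring, c_blowDown_pred]
  rw [sum_range_succ, sum_range_succ', sum_congr rfl hmid, Nat.cast_zero, c_blowDown_zero, hlast,
    sum_range_succ, sum_range_succ', sum_range_succ']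
  push_cast
  simp only [h, add_assoc, one_add_one_eq_two]
  ring

theorem sum_c {d : ℕ} (F : SmoothCompleteFan d) : ∑ t ∈ range d, F.c t = 3 * d - 12 := by
  induction d using Nat.strong_induction_on with
  | _ d ih =>
  obtain rfl | rfl | hd : d = 3 ∨ d = 4 ∨ 5 ≤ d := by have := F.three_le; omega
  · simp [c_eq_neg_one]
  · have h₀ := F.c_add_two 0
    have h₁ := F.c_add_two 1
    norm_num at h₀ h₁
    simp [sum_range_succ, h₀, h₁]
  · obtain ⟨i, hi⟩ := F.exists_c_eq_one hd
    obtain ⟨n, rfl⟩ : ∃ n, d = n + 1 := ⟨d - 1, by omega⟩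
    have h₀ : (F.shift i).c 0 = 1 := by rw [c_shift, zero_add, hi]
    have := ih n (by omega) ((F.shift i).blowDown h₀)
    rw [sum_c_blowDown, sum_c_shift] at this
    push_cast at this ⊢
    linarith

end SmoothCompleteFan

section ofFin

open Fin.CommRing

variable {d : ℕ} [NeZero d]

noncomputable def liftAngle (θ : Fin d → ℝ) (t : ℤ) : ℝ := θ t + (t / d : ℤ) * (2 * π)

lemma liftAngle_add (θ : Fin d → ℝ) (t : ℤ) :
    liftAngle θ (t + d) = liftAngle θ t + 2 * π := by
  have hd : (d : ℤ) ≠ 0 := by exact_mod_cast NeZero.ne d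
  simp only [liftAngle, Int.add_ediv_of_dvd_right dvd_rfl, Int.ediv_self hd, Int.cast_add,
    Int.cast_natCast, Fin.natCast_self, add_zero, Int.cast_one]
  ring

lemma liftAngle_of_lt (θ : Fin d → ℝ) {t : ℤ} (h₀ : 0 ≤ t) (h : t < d) :
    liftAngle θ t = θ t := by
  simp [liftAngle, Int.ediv_eq_zero_of_lt h₀ h]

lemma Fin.intCast_lt_intCast {s t : ℤ} (hs : 0 ≤ s) (hst : s < t) (ht : t < d) :
    (s : Fin d) < (t : Fin d) := by
  rw [Fin.lt_def, Fin.val_intCast, Fin.val_intCast, Int.emod_eq_of_lt hs (by omega),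
    Int.emod_eq_of_lt (by omega) ht]
  omega

lemma strictMono_liftAngle {θ : Fin d → ℝ} (hccw : StrictMono θ)
    (hwind : ∀ i j, θ i - θ j < 2 * π) : StrictMono (liftAngle θ) := by
  refine strictMono_int_of_lt_succ fun t => sub_pos.1 ?_
  have hper : Function.Periodic (fun t => liftAngle θ (t + 1) - liftAngle θ t) d := fun t => by
    simp only [add_right_comm t (d : ℤ) 1, liftAngle_add]; ring
  obtain ⟨y, ⟨hy₀, hyd⟩, hy⟩ := hper.exists_mem_Ico₀ (by exact_mod_cast NeZero.pos d) t
  rw [hy, liftAngle_of_lt θ hy₀ hyd, sub_pos]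
  rcases (show y + 1 < d ∨ y + 1 = d by omega) with hy₁ | hy₁
  · rw [liftAngle_of_lt θ (by omega) hy₁]
    exact hccw (Fin.intCast_lt_intCast hy₀ (by omega) hy₁)
  · rw [hy₁, ← zero_add (d : ℤ), liftAngle_add, liftAngle_of_lt θ le_rfl (by omega)]
    have := hwind y 0
    rw [Int.cast_zero]
    linarith

namespace SmoothCompleteFan

variable (v : Fin d → ℤ × ℤ) (r θ : Fin d → ℝ) (hr : ∀ i, 0 < r i)
  (hpolar : ∀ i, ((v i).1 : ℝ) = r i * cos (θ i) ∧ ((v i).2 : ℝ) = r i * sin (θ i))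
  (hccw : StrictMono θ) (hwind : ∀ i j, θ i - θ j < 2 * π)
  (hdet : ∀ i : Fin d, det (v i) (v (i + 1)) = 1)

noncomputable def ofFin : SmoothCompleteFan d where
  v t := v t
  r t := r t
  θ := liftAngle θ
  v_add_period t := by simp
  θ_add_period := liftAngle_add θ
  θ_strictMono := strictMono_liftAngle hccw hwind
  r_pos t := hr t
  v_polar t := by
    simp only [liftAngle, cos_add_int_mul_two_pi, sin_add_int_mul_two_pi]
    exact hpolar t
  det_succ t := by push_cast; exact hdet t

lemma sum_c_ofFin : ∑ t ∈ range d, (ofFin v r θ hr hpolar hccw hwind hdet).c t =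
    ∑ i : Fin d, det (v (i - 1)) (v (i + 1)) := by
  rw [← Fin.sum_univ_eq_sum_range]
  refine sum_congr rfl fun i _ => ?_
  simp [c, ofFin]

end SmoothCompleteFan

end ofFin

theorem stmt4_general (d : ℕ) [NeZero d] (v : Fin d → ℤ × ℤ)
    (r θ : Fin d → ℝ) (hr : ∀ i, 0 < r i)
    (hpolar : ∀ i, ((v i).1 : ℝ) = r i * Real.cos (θ i) ∧
        ((v i).2 : ℝ) = r i * Real.sin (θ i))
    (hccw : StrictMono θ)
    (hwind : ∀ i j, θ i - θ j < 2 * Real.pi)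
    (hdet : ∀ i : Fin d, (v i).1 * (v (i + 1)).2 - (v i).2 * (v (i + 1)).1 = 1) :
    (∀ i : Fin d, ∃! c : ℤ, v (i - 1) + v (i + 1) = c • v i) ∧
      (∀ c : Fin d → ℤ, (∀ i, v (i - 1) + v (i + 1) = (c i) • v i) →
        ∑ i, c i = 3 * (d : ℤ) - 12) := by
  have hrel : ∀ i (k : ℤ),
      v (i - 1) + v (i + 1) = k • v i ↔ k = det (v (i - 1)) (v (i + 1)) :=
    fun i => add_eq_smul_iff (by have := hdet (i - 1); rwa [sub_add_cancel] at this) (hdet i)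
  refine ⟨fun i => ⟨_, (hrel i _).2 rfl, fun k hk => (hrel i k).1 hk⟩, fun c hc => ?_⟩
  rw [sum_congr rfl fun i _ => (hrel i (c i)).1 (hc i),
    ← SmoothCompleteFan.sum_c_ofFin v r θ hr hpolar hccw hwind hdet, SmoothCompleteFan.sum_c]

/-- Let `v₁, …, v_d ∈ ℤ²` (`d ≥ 3`) be pairwise distinct primitive vectors in strictly
counterclockwise cyclic order with total turning one full revolution (encoded by the polar
data `r, θ` with `θ` strictly increasing and spanning less than `2π`), such that
`det(vᵢ, vᵢ₊₁) = 1` for all `i` (indices mod `d`).  Then for each `i` there is a unique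
integer `cᵢ` with `vᵢ₋₁ + vᵢ₊₁ = cᵢ • vᵢ`, and `∑ cᵢ = 3d - 12`. -/
theorem stmt4 (d : ℕ) [NeZero d] (hd : 3 ≤ d) (v : Fin d → ℤ × ℤ)
    (hinj : Function.Injective v)
    (hprim : ∀ i, Int.gcd (v i).1 (v i).2 = 1)
    (r θ : Fin d → ℝ) (hr : ∀ i, 0 < r i)
    (hpolar : ∀ i, ((v i).1 : ℝ) = r i * Real.cos (θ i) ∧
        ((v i).2 : ℝ) = r i * Real.sin (θ i))
    (hccw : StrictMono θ)
    (hwind : ∀ i j, θ i - θ j < 2 * Real.pi)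
    (hdet : ∀ i : Fin d, (v i).1 * (v (i + 1)).2 - (v i).2 * (v (i + 1)).1 = 1) :
    (∀ i : Fin d, ∃! c : ℤ, v (i - 1) + v (i + 1) = c • v i) ∧
      (∀ c : Fin d → ℤ, (∀ i, v (i - 1) + v (i + 1) = (c i) • v i) →
        ∑ i, c i = 3 * (d : ℤ) - 12) :=
  stmt4_general d v r θ hr hpolar hccw hwind hdet
end
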